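/- The vectors u_j(k) = (1/√N_j(k))·[ (c₁s₂ e^{ik} - s₁c₂), i(-c₁c₂ sin k - (-1)^j √(1-A(k)²)) ]ᵀ for j = 1, 2 form an orthonormal basis of ℂ², provided N₁(k), N₂(k) > 0, where A(k) = c₁c₂ cos k + s₁s₂ and N_j(k) = 2√(1-A²)(√(1-A²) + (-1)^j c₁c₂ sin k). -/

import Mathlib

/-- `A(k) = c₁c₂ cos k + s₁s₂`. -/
noncomputable def Aval (θ₁ θ₂ k : ℝ) : ℝ :=
  Real.cos θ₁ * Real.cos θ₂ * Real.cos k + Real.sin θ₁ * Real.sin θ₂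

/-- `N_j(k) = 2√(1-A²)(√(1-A²) + (-1)^j c₁c₂ sin k)`. -/
noncomputable def Nfun (θ₁ θ₂ : ℝ) (j : ℕ) (k : ℝ) : ℝ :=
  2 * Real.sqrt (1 - (Aval θ₁ θ₂ k) ^ 2) *
    (Real.sqrt (1 - (Aval θ₁ θ₂ k) ^ 2)
      + (-1 : ℝ) ^ j * (Real.cos θ₁ * Real.cos θ₂ * Real.sin k))

/-- The eigenvector `u_j(k)` of `Û₁(k)Û₂(k)`, as an element of `ℂ²`. -/
noncomputable def uvec (θ₁ θ₂ k : ℝ) (j : ℕ) : EuclideanSpace ℂ (Fin 2) :=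
  ((1 / Real.sqrt (Nfun θ₁ θ₂ j k) : ℝ) : ℂ) •
    (WithLp.equiv 2 (Fin 2 → ℂ)).symm
      ![(Real.cos θ₁ * Real.sin θ₂ : ℝ) * Complex.exp ((k : ℂ) * Complex.I)
          - ((Real.sin θ₁ * Real.cos θ₂ : ℝ) : ℂ),
        Complex.I * ((-(Real.cos θ₁ * Real.cos θ₂ * Real.sin k)
          - (-1 : ℝ) ^ j * Real.sqrt (1 - (Aval θ₁ θ₂ k) ^ 2) : ℝ) : ℂ)]

/-!
Write `u_j = N_j^{-1/2} (a, i b_j)` with `a = c₁s₂e^{ik} - s₁c₂` and `b_j` real. Then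
`⟨u_i, u_j⟩` is a multiple of `|a|² + b_i b_j`, and everything follows from the identity
`1 - A² = |a|² + (c₁c₂ sin k)²`: with `S = √(1 - A²)` and `b_j = -c₁c₂ sin k - (-1)^j S`
it gives `|a|² + b₁b₂ = 0` and `|a|² + b_j² = N_j`. Two orthonormal vectors in `ℂ²` form a basis.
-/

open Complex

section Orthonormal

variable {𝕜 E : Type*} [RCLike 𝕜] [NormedAddCommGroup E] [InnerProductSpace 𝕜 E]

theorem orthonormal_pair {v w : E} (hv : ‖v‖ = 1) (hw : ‖w‖ = 1) (hvw : inner 𝕜 v w = 0) :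
    Orthonormal 𝕜 ![v, w] := by
  refine ⟨Fin.forall_fin_two.2 ⟨hv, hw⟩, fun i j hij => ?_⟩
  fin_cases i <;> fin_cases j
  · exact absurd rfl hij
  · exact hvw
  · exact inner_eq_zero_symm.1 hvw
  · exact absurd rfl hij

theorem exists_orthonormalBasis_coe_eq {ι : Type*} [Fintype ι] [Nonempty ι]
    [FiniteDimensional 𝕜 E] {v : ι → E} (hv : Orthonormal 𝕜 v)
    (hcard : Fintype.card ι = Module.finrank 𝕜 E) :
    ∃ B : OrthonormalBasis ι 𝕜 E, ⇑B = v :=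
  ⟨(basisOfOrthonormalOfCardEqFinrank hv hcard).toOrthonormalBasis
      (by rwa [coe_basisOfOrthonormalOfCardEqFinrank]),
    by rw [Module.Basis.coe_toOrthonormalBasis, coe_basisOfOrthonormalOfCardEqFinrank]⟩

end Orthonormal

theorem inner_toLp_mul_I (a : ℂ) (b b' : ℝ) :
    inner ℂ (WithLp.toLp 2 ![a, I * b]) (WithLp.toLp 2 ![a, I * b']) =
      ((normSq a + b * b' : ℝ) : ℂ) := by
  simp [PiLp.inner_apply, Fin.sum_univ_two, mul_conj]
  ring_nf
  simp

theorem norm_toLp_mul_I_sq (a : ℂ) (b : ℝ) :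
    ‖WithLp.toLp 2 ![a, I * b]‖ ^ 2 = normSq a + b ^ 2 := by
  simp [EuclideanSpace.norm_sq_eq, Fin.sum_univ_two, normSq_eq_norm_sq]

section Eigenvectors

variable (θ₁ θ₂ k : ℝ)

noncomputable def uvecFst : ℂ :=
  (Real.cos θ₁ * Real.sin θ₂ : ℝ) * exp (k * I) - (Real.sin θ₁ * Real.cos θ₂ : ℝ)

noncomputable def uvecSnd (j : ℕ) : ℝ :=
  -(Real.cos θ₁ * Real.cos θ₂ * Real.sin k) - (-1 : ℝ) ^ j * Real.sqrt (1 - (Aval θ₁ θ₂ k) ^ 2)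

theorem uvec_eq_smul (j : ℕ) :
    uvec θ₁ θ₂ k j = ((1 / Real.sqrt (Nfun θ₁ θ₂ j k) : ℝ) : ℂ) •
      WithLp.toLp 2 ![uvecFst θ₁ θ₂ k, I * uvecSnd θ₁ θ₂ k j] :=
  rfl

theorem normSq_uvecFst :
    normSq (uvecFst θ₁ θ₂ k) =
      (Real.cos θ₁ * Real.sin θ₂ * Real.cos k - Real.sin θ₁ * Real.cos θ₂) ^ 2
        + (Real.cos θ₁ * Real.sin θ₂ * Real.sin k) ^ 2 := by
  rw [uvecFst, exp_mul_I, ← ofReal_cos, ← ofReal_sin]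
  simp [normSq_apply, cos_ofReal_re, sin_ofReal_re]
  ring

theorem one_sub_Aval_sq :
    1 - Aval θ₁ θ₂ k ^ 2 =
      normSq (uvecFst θ₁ θ₂ k) + (Real.cos θ₁ * Real.cos θ₂ * Real.sin k) ^ 2 := by
  rw [normSq_uvecFst, Aval]
  linear_combination
      -(Real.cos θ₁ ^ 2 * (Real.sin θ₂ ^ 2 + Real.cos θ₂ ^ 2)) * Real.sin_sq_add_cos_sq k
      - (Real.cos θ₂ ^ 2 + Real.sin θ₂ ^ 2) * Real.sin_sq_add_cos_sq θ₁
      - Real.sin_sq_add_cos_sq θ₂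

theorem sq_sqrt_one_sub_Aval_sq :
    Real.sqrt (1 - Aval θ₁ θ₂ k ^ 2) ^ 2 = 1 - Aval θ₁ θ₂ k ^ 2 :=
  Real.sq_sqrt (by rw [one_sub_Aval_sq]; exact add_nonneg (normSq_nonneg _) (sq_nonneg _))

theorem normSq_uvecFst_add_uvecSnd_sq (j : ℕ) :
    normSq (uvecFst θ₁ θ₂ k) + uvecSnd θ₁ θ₂ k j ^ 2 = Nfun θ₁ θ₂ j k := by
  have hsign : ((-1 : ℝ) ^ j) ^ 2 = 1 := by rw [← pow_mul, pow_mul', neg_one_sq, one_pow]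
  rw [uvecSnd, Nfun]
  linear_combination -one_sub_Aval_sq θ₁ θ₂ k - sq_sqrt_one_sub_Aval_sq θ₁ θ₂ k
    + Real.sqrt (1 - Aval θ₁ θ₂ k ^ 2) ^ 2 * hsign

theorem normSq_uvecFst_add_uvecSnd_one_mul_two :
    normSq (uvecFst θ₁ θ₂ k) + uvecSnd θ₁ θ₂ k 1 * uvecSnd θ₁ θ₂ k 2 = 0 := by
  rw [uvecSnd, uvecSnd]
  linear_combination -one_sub_Aval_sq θ₁ θ₂ k - sq_sqrt_one_sub_Aval_sq θ₁ θ₂ k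

theorem norm_uvec {j : ℕ} (hN : 0 < Nfun θ₁ θ₂ j k) : ‖uvec θ₁ θ₂ k j‖ = 1 := by
  set x : EuclideanSpace ℂ (Fin 2) :=
    WithLp.toLp 2 ![uvecFst θ₁ θ₂ k, I * uvecSnd θ₁ θ₂ k j]
  have hx : ‖x‖ ^ 2 = Nfun θ₁ θ₂ j k :=
    (norm_toLp_mul_I_sq _ _).trans (normSq_uvecFst_add_uvecSnd_sq θ₁ θ₂ k j)
  have hx0 : x ≠ 0 := by
    rintro h
    rw [h, norm_zero, sq, zero_mul] at hx
    exact hN.ne hx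
  rw [uvec_eq_smul, ← hx, Real.sqrt_sq (norm_nonneg x), one_div, ofReal_inv]
  exact norm_smul_inv_norm hx0

theorem inner_uvec_one_two : inner ℂ (uvec θ₁ θ₂ k 1) (uvec θ₁ θ₂ k 2) = 0 := by
  rw [uvec_eq_smul, uvec_eq_smul, inner_smul_left, inner_smul_right, inner_toLp_mul_I,
    normSq_uvecFst_add_uvecSnd_one_mul_two]
  simp

end Eigenvectors

theorem stmt_10 (θ₁ θ₂ k : ℝ)
    (hN₁ : 0 < Nfun θ₁ θ₂ 1 k) (hN₂ : 0 < Nfun θ₁ θ₂ 2 k) :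
    ∃ B : OrthonormalBasis (Fin 2) ℂ (EuclideanSpace ℂ (Fin 2)),
      ⇑B = ![uvec θ₁ θ₂ k 1, uvec θ₁ θ₂ k 2] :=
  exists_orthonormalBasis_coe_eq
    (orthonormal_pair (norm_uvec θ₁ θ₂ k hN₁) (norm_uvec θ₁ θ₂ k hN₂)
      (inner_uvec_one_two θ₁ θ₂ k))
    (by simp)
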